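/- arXiv:2402.05724 — 2 statements merged into one kernel-verified Lean document; each statement's English description precedes it below -/
import Mathlib

section
/- Let 𝓜 be a finite nonempty class of mean-field MDPs on common finite S, A, horizon H and initial distribution μ₁, all sharing the reward functions r_h, and assume the global Lipschitz conditions: for all M ∈ 𝓜, all h, s, a and all μ, μ' ∈ Δ(S), ‖P_{M,h}(·|s,a,μ) − P_{M,h}(·|s,a,μ')‖₁ ≤ L_T·‖μ−μ'‖₁ and |r_h(s,a,μ) − r_h(s,a,μ')| ≤ L_r·‖μ−μ'‖₁, where L_T, L_r > 0. Fix ε₀ > 0, for each policy π fix a central model M_Ctr^π ∈ argmax_{M∈𝓜} |B^{ε₀}_π(M;𝓜)|, and suppose |B^{ε₀}_π(M_Ctr^π;𝓜)| > |𝓜|/2 for every π ∈ Π. Let ε̄ > 0 satisfy 2H(H+1)((1+L_T)^H − 1)·ε̄ ≤ ε₀ and 2H·ε̄ ≤ ε₀, and let Π_ε̄ be a finite ε̄-cover of Π with respect to d_{∞,1}. Define, for each π ∈ Π, h, s, a, the bridge model by P̈_{Br,h}(·|s,a,π) := (Σ_{π̃∈Π_ε̄} w_π(π̃)·P_{M_Ctr^{π̃},h}(·|s,a,μ^{π̃}_{M_Ctr^{π̃},h}))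 / (Σ_{π̃∈Π_ε̄} w_π(π̃)) and r̈_{Br,h}(s,a,π) := (Σ_{π̃∈Π_ε̄} w_π(π̃)·r_h(s,a,μ^{π̃}_{M_Ctr^{π̃},h})) / (Σ_{π̃∈Π_ε̄} w_π(π̃)), where w_π(π̃) := max{2ε̄ − d_{∞,1}(π,π̃), 0}. Then the bridge model is well defined (the denominator is strictly positive for every π), and for every π ∈ Π: max_{π̃∈Π} E_{π̃,M_Ctr^π(π)}[Σ_{h=1}^H ‖P_{M_Ctr^π,h}(·|s_h,a_h,μ^π_{M_Ctr^π,h}) − P̈_{Br,h}(·|s_h,a_h,π)‖₁] ≤ (H+3)·ε₀, and max_{π̃∈Π} E_{π̃,M_Ctr^π(π)}[Σ_{h=1}^H |r_h(s_h,a_h,μ^π_{M_Ctr^π,h}) − r̈_{Br,h}(s_h,a_h,π)|] ≤ L_r·H·(H+4)·ε₀. -/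
/-- ℓ1 distance between two functions on a finite type. -/
def l1 {X : Type*} [Fintype X] (p q : X → ℝ) : ℝ := ∑ x, |p x - q x|

/-- A (nonstationary Markov) policy: at each step `h` (0-indexed) and state `s`,
`π h s` is a probability distribution over actions. -/
def IsPolicy {S A : Type*} [Fintype A] (π : ℕ → S → A → ℝ) : Prop :=
  ∀ h s, (∀ a, 0 ≤ π h s a) ∧ ∑ a, π h s a = 1

/-- The transition kernels of a mean-field MDP with horizon `H`:
at each step `h < H`, `P h s a μ ∈ Δ(S)` whenever `μ ∈ Δ(S)`. -/
def IsKernel {S A : Type*} [Fintype S] (H : ℕ) (P : ℕ → S → A → (S → ℝ) → S → ℝ) : Prop :=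
  ∀ h, h < H → ∀ s a (μ : S → ℝ), μ ∈ stdSimplex ℝ S → P h s a μ ∈ stdSimplex ℝ S

/-- Induced state densities: `dens P μ₁ π h = μ^π_{M,h+1}` (1-indexed step `h+1`). -/
def dens {S A : Type*} [Fintype S] [Fintype A] (P : ℕ → S → A → (S → ℝ) → S → ℝ)
    (μ₁ : S → ℝ) (π : ℕ → S → A → ℝ) : ℕ → S → ℝ
  | 0 => μ₁
  | h + 1 => fun s' => ∑ s, ∑ a, dens P μ₁ π h s * π h s a * P h s a (dens P μ₁ π h) s'

/-- The state law of executing `π̃` while the kernels are frozen at the densities induced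
by the reference policy `π` in model `M = (P, μ₁)`. -/
def densF {S A : Type*} [Fintype S] [Fintype A] (P : ℕ → S → A → (S → ℝ) → S → ℝ)
    (μ₁ : S → ℝ) (π πt : ℕ → S → A → ℝ) : ℕ → S → ℝ
  | 0 => μ₁
  | h + 1 => fun s' => ∑ s, ∑ a, densF P μ₁ π πt h s * πt h s a * P h s a (dens P μ₁ π h) s'

/-- `E_{π̃,M(π)}[Σ_{h=1}^H f_h(s_h,a_h)]`. -/
def expF {S A : Type*} [Fintype S] [Fintype A] (H : ℕ) (P : ℕ → S → A → (S → ℝ) → S → ℝ)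
    (μ₁ : S → ℝ) (π πt : ℕ → S → A → ℝ) (f : ℕ → S → A → ℝ) : ℝ :=
  ∑ h ∈ Finset.range H, ∑ s, ∑ a, densF P μ₁ π πt h s * πt h s a * f h s a

/-- The return `J_M(π̃;π)` of executing `π̃` with transitions and rewards frozen by `π`. -/
def Jret {S A : Type*} [Fintype S] [Fintype A] (H : ℕ) (P : ℕ → S → A → (S → ℝ) → S → ℝ)
    (r : ℕ → S → A → (S → ℝ) → ℝ) (μ₁ : S → ℝ) (πt π : ℕ → S → A → ℝ) : ℝ :=
  expF H P μ₁ π πt fun h s a => r h s a (dens P μ₁ π h)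

/-- One-sided conditional model distance `d^{π̃}(M,M'|π)`. -/
def dCond {S A : Type*} [Fintype S] [Fintype A] (H : ℕ)
    (P P' : ℕ → S → A → (S → ℝ) → S → ℝ) (μ₁ : S → ℝ) (π πt : ℕ → S → A → ℝ) : ℝ :=
  expF H P μ₁ π πt fun h s a => l1 (P h s a (dens P μ₁ π h)) (P' h s a (dens P' μ₁ π h))

/-- The distance `d_{∞,1}(π,π') = max_{h<H, s} ‖π_h(·|s) − π'_h(·|s)‖₁` on policies. -/
noncomputable def dInf {S A : Type*} [Fintype A] (H : ℕ) (π π' : ℕ → S → A → ℝ) : ℝ :=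
  sSup {x : ℝ | ∃ h < H, ∃ s : S, x = l1 (π h s) (π' h s)}

/-- The `ε₀`-neighborhood `B^{ε₀}_π(m;𝓜)` of the model `m` in the model class indexed by
`ι`, conditioned on the reference policy `π`. -/
def nbhd {S A ι : Type*} [Fintype S] [Fintype A] (H : ℕ)
    (P : ι → ℕ → S → A → (S → ℝ) → S → ℝ) (μ₁ : S → ℝ) (ε₀ : ℝ)
    (π : ℕ → S → A → ℝ) (m : ι) : Set ι :=
  {m' | ∀ πt, IsPolicy πt →
    dCond H (P m) (P m') μ₁ π πt ≤ ε₀ ∧ dCond H (P m') (P m) μ₁ π πt ≤ ε₀}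

/-!
The bridge kernel at `π` is a convex combination of the kernels of the central models of the
cover points `πc` with `d_{∞,1}(π, πc) < 2ε̄`, so by convexity of `‖·‖₁` and `|·|` it suffices
to compare the central model `Mc` of `π` with the central model `Mc'` of one such `πc`. Both
neighbourhoods contain more than half of the class, hence a common model `Mm`. Going
`Mc → Mm` at `π`, moving the reference policy of `Mm` from `π` to `πc`, and going `Mm → Mc'`
at `πc` costs `ε₀` per model change; by Lipschitz continuity the policy move shifts the
densities of `Mm` by at most `2ε̄ ∑_{k<h} (1 + L_T)^k`, which the choice of `ε̄` keeps small.
For transitions the last leg is measured under the state law of `(Mc, π)` instead of that of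
`(Mm, πc)`; since the integrand lies in `[0, 2]` this costs only the ℓ1 distance of the two
laws, again at most `ε₀` up to a drift absorbed by the choice of `ε̄`.
-/

open Finset hiding dens
open Matrix

section L1

variable {X Y : Type*} [Fintype X] [Fintype Y]

@[simp] lemma l1_self (p : X → ℝ) : l1 p p = 0 := by simp [l1]

lemma l1_nonneg (p q : X → ℝ) : 0 ≤ l1 p q := sum_nonneg fun _ _ => abs_nonneg _

lemma l1_comm (p q : X → ℝ) : l1 p q = l1 q p := by simp only [l1, abs_sub_comm]

lemma l1_triangle (p q r : X → ℝ) : l1 p r ≤ l1 p q + l1 q r := by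
  simp only [l1, ← sum_add_distrib]
  exact sum_le_sum fun _ _ => abs_sub_le _ _ _

lemma l1_le_two {p q : X → ℝ} (hp : p ∈ stdSimplex ℝ X) (hq : q ∈ stdSimplex ℝ X) :
    l1 p q ≤ 2 := by
  calc l1 p q ≤ ∑ x, (p x + q x) := sum_le_sum fun x _ => by
        simpa [abs_of_nonneg (hp.1 x), abs_of_nonneg (hq.1 x)] using abs_sub (p x) (q x)
    _ = 2 := by rw [sum_add_distrib, hp.2, hq.2]; norm_num

lemma abs_sub_div_sum_le {ι : Type*} {t : Finset ι} {w : ι → ℝ} (hw : ∀ i ∈ t, 0 ≤ w i)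
    (hW : 0 < ∑ i ∈ t, w i) (q : ℝ) (p : ι → ℝ) :
    |q - (∑ i ∈ t, w i * p i) / ∑ i ∈ t, w i|
      ≤ ∑ i ∈ t, w i / (∑ i ∈ t, w i) * |q - p i| := by
  have hq : q - (∑ i ∈ t, w i * p i) / ∑ i ∈ t, w i
      = ∑ i ∈ t, w i / (∑ i ∈ t, w i) * (q - p i) := by
    simp only [div_mul_eq_mul_div, ← sum_div, mul_sub, sum_sub_distrib, ← sum_mul]
    rw [mul_div_cancel_left₀ _ hW.ne']
  rw [hq]
  refine (abs_sum_le_sum_abs _ _).trans (sum_le_sum fun i hi => ?_)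
  rw [abs_mul, abs_of_nonneg (div_nonneg (hw i hi) hW.le)]

lemma l1_div_sum_le {ι : Type*} {t : Finset ι} {w : ι → ℝ} (hw : ∀ i ∈ t, 0 ≤ w i)
    (hW : 0 < ∑ i ∈ t, w i) (q : X → ℝ) (p : ι → X → ℝ) :
    l1 q (fun x => (∑ i ∈ t, w i * p i x) / ∑ i ∈ t, w i)
      ≤ ∑ i ∈ t, w i / (∑ i ∈ t, w i) * l1 q (p i) := by
  simp only [l1, mul_sum]
  rw [sum_comm]
  exact sum_le_sum fun x _ => abs_sub_div_sum_le hw hW (q x) (p · x)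

lemma dotProduct_le_of_le_const {u g : X → ℝ} {c : ℝ} (hu : u ∈ stdSimplex ℝ X)
    (hg : ∀ x, g x ≤ c) : u ⬝ᵥ g ≤ c := by
  calc u ⬝ᵥ g ≤ u ⬝ᵥ fun _ => c := dotProduct_le_dotProduct_of_nonneg_left hg hu.1
    _ = c := by simp [dotProduct, ← sum_mul, hu.2]

/-- Since `u - v` has total mass zero, only the oscillation `|g - 1| ≤ 1` of `g` around the
centre of `[0, 2]` is seen. -/
lemma dotProduct_le_add_l1 {u v g : X → ℝ} (hu : ∑ x, u x = 1) (hv : ∑ x, v x = 1)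
    (hg : ∀ x, g x ∈ Set.Icc (0 : ℝ) 2) : u ⬝ᵥ g ≤ v ⬝ᵥ g + l1 u v := by
  have hmass : (u - v) ⬝ᵥ (g - 1) = u ⬝ᵥ g - v ⬝ᵥ g := by
    simp [sub_dotProduct, dotProduct_sub, dotProduct_one, hu, hv]
  have hosc : (u - v) ⬝ᵥ (g - 1) ≤ l1 u v :=
    sum_le_sum fun x _ => by
      have hg1 : |g x - 1| ≤ 1 := abs_le.2 ⟨by linarith [(hg x).1], by linarith [(hg x).2]⟩
      calc (u x - v x) * (g x - 1) ≤ |u x - v x| * |g x - 1| := by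
            rw [← abs_mul]; exact le_abs_self _
        _ ≤ |u x - v x| := mul_le_of_le_one_right (abs_nonneg _) hg1
  linarith

lemma vecMul_mem_stdSimplex {u : X → ℝ} {M : Matrix X Y ℝ} (hu : u ∈ stdSimplex ℝ X)
    (hM : ∀ x, M x ∈ stdSimplex ℝ Y) : u ᵥ* M ∈ stdSimplex ℝ Y := by
  refine ⟨fun y => sum_nonneg fun x _ => mul_nonneg (hu.1 x) ((hM x).1 y), ?_⟩
  simp only [vecMul, dotProduct]
  rw [sum_comm]
  simp [← mul_sum, (hM _).2, hu.2]

lemma l1_vecMul_le {u v : X → ℝ} {M : Matrix X Y ℝ} (hM : ∀ x, M x ∈ stdSimplex ℝ Y) :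
    l1 (u ᵥ* M) (v ᵥ* M) ≤ l1 u v := by
  calc l1 (u ᵥ* M) (v ᵥ* M) = ∑ y, |∑ x, (u x - v x) * M x y| := by
        simp only [l1, vecMul, dotProduct, ← sum_sub_distrib, sub_mul]
    _ ≤ ∑ y, ∑ x, |u x - v x| * M x y := sum_le_sum fun y _ =>
        (abs_sum_le_sum_abs _ _).trans_eq (by simp [abs_mul, abs_of_nonneg ((hM _).1 y)])
    _ = l1 u v := by rw [sum_comm]; simp [l1, ← mul_sum, (hM _).2]

lemma l1_vecMul_le_dotProduct {u : X → ℝ} {M N : Matrix X Y ℝ} (hu : 0 ≤ u) :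
    l1 (u ᵥ* M) (u ᵥ* N) ≤ u ⬝ᵥ fun x => l1 (M x) (N x) := by
  calc l1 (u ᵥ* M) (u ᵥ* N) = ∑ y, |∑ x, u x * (M x y - N x y)| := by
        simp only [l1, vecMul, dotProduct, ← sum_sub_distrib, mul_sub]
    _ ≤ ∑ y, ∑ x, u x * |M x y - N x y| := sum_le_sum fun y _ =>
        (abs_sum_le_sum_abs _ _).trans_eq (by simp [abs_mul, abs_of_nonneg (hu _)])
    _ = u ⬝ᵥ fun x => l1 (M x) (N x) := by rw [sum_comm]; simp [l1, dotProduct, mul_sum]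

end L1

section Step

variable {S A : Type*} [Fintype S] [Fintype A]

lemma l1_vecMul_vecMul_le {ν ν' : S → ℝ} {p p' : S → A → ℝ} {K K' : S → A → S → ℝ}
    (hν : 0 ≤ ν) (hp : ∀ s, 0 ≤ p s) (hp' : ∀ s, p' s ∈ stdSimplex ℝ A)
    (hK' : ∀ s a, K' s a ∈ stdSimplex ℝ S) :
    l1 (ν ᵥ* fun s => p s ᵥ* K s) (ν' ᵥ* fun s => p' s ᵥ* K' s)
      ≤ (ν ⬝ᵥ fun s => p s ⬝ᵥ fun a => l1 (K s a) (K' s a))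
        + (ν ⬝ᵥ fun s => l1 (p s) (p' s)) + l1 ν ν' := by
  have hkernel : l1 (ν ᵥ* fun s => p s ᵥ* K s) (ν ᵥ* fun s => p s ᵥ* K' s)
      ≤ ν ⬝ᵥ fun s => p s ⬝ᵥ fun a => l1 (K s a) (K' s a) :=
    (l1_vecMul_le_dotProduct hν).trans <| dotProduct_le_dotProduct_of_nonneg_left
      (fun s => l1_vecMul_le_dotProduct (hp s)) hν
  have hpolicy : l1 (ν ᵥ* fun s => p s ᵥ* K' s) (ν ᵥ* fun s => p' s ᵥ* K' s)
      ≤ ν ⬝ᵥ fun s => l1 (p s) (p' s) :=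
    (l1_vecMul_le_dotProduct hν).trans <| dotProduct_le_dotProduct_of_nonneg_left
      (fun s => l1_vecMul_le (hK' s)) hν
  have hlaw : l1 (ν ᵥ* fun s => p' s ᵥ* K' s) (ν' ᵥ* fun s => p' s ᵥ* K' s) ≤ l1 ν ν' :=
    l1_vecMul_le fun s => vecMul_mem_stdSimplex (hp' s) (hK' s)
  linarith [l1_triangle (ν ᵥ* fun s => p s ᵥ* K s) (ν ᵥ* fun s => p s ᵥ* K' s)
    (ν' ᵥ* fun s => p' s ᵥ* K' s), l1_triangle (ν ᵥ* fun s => p s ᵥ* K' s)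
    (ν ᵥ* fun s => p' s ᵥ* K' s) (ν' ᵥ* fun s => p' s ᵥ* K' s)]

end Step

section Laws

variable {S A : Type*} [Fintype S] [Fintype A] {H : ℕ} {P P' : ℕ → S → A → (S → ℝ) → S → ℝ}
  {μ₁ : S → ℝ} {π π' πt : ℕ → S → A → ℝ}

lemma dens_succ (h : ℕ) : dens P μ₁ π (h + 1)
    = dens P μ₁ π h ᵥ* fun s => π h s ᵥ* fun a => P h s a (dens P μ₁ π h) := by
  ext s'
  simp [dens, vecMul, dotProduct, mul_sum, mul_assoc]

lemma densF_succ (h : ℕ) : densF P μ₁ π πt (h + 1)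
    = densF P μ₁ π πt h ᵥ* fun s => πt h s ᵥ* fun a => P h s a (dens P μ₁ π h) := by
  ext s'
  simp [densF, vecMul, dotProduct, mul_sum, mul_assoc]

lemma dens_eq_densF : dens P μ₁ π = densF P μ₁ π π := by
  ext h : 1
  induction h with
  | zero => rfl
  | succ h ih => rw [dens_succ, densF_succ, ih]

lemma expF_eq_sum_dotProduct (f : ℕ → S → A → ℝ) : expF H P μ₁ π πt f
    = ∑ h ∈ range H, densF P μ₁ π πt h ⬝ᵥ fun s => πt h s ⬝ᵥ f h s := by
  simp [expF, dotProduct, mul_sum, mul_assoc]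

lemma dens_mem_stdSimplex (hμ₁ : μ₁ ∈ stdSimplex ℝ S) (hP : IsKernel H P) (hπ : IsPolicy π)
    {h : ℕ} (hh : h ≤ H) : dens P μ₁ π h ∈ stdSimplex ℝ S := by
  induction h with
  | zero => exact hμ₁
  | succ h ih =>
    rw [dens_succ]
    exact vecMul_mem_stdSimplex (ih (by omega)) fun s =>
      vecMul_mem_stdSimplex (hπ h s) fun a => hP h (by omega) s a _ (ih (by omega))

lemma densF_mem_stdSimplex (hμ₁ : μ₁ ∈ stdSimplex ℝ S) (hP : IsKernel H P) (hπ : IsPolicy π)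
    (hπt : IsPolicy πt) {h : ℕ} (hh : h ≤ H) : densF P μ₁ π πt h ∈ stdSimplex ℝ S := by
  induction h with
  | zero => exact hμ₁
  | succ h ih =>
    rw [densF_succ]
    exact vecMul_mem_stdSimplex (ih (by omega)) fun s => vecMul_mem_stdSimplex (hπt h s)
      fun a => hP h (by omega) s a _ (dens_mem_stdSimplex hμ₁ hP hπ (by omega))

lemma expF_mono (hμ₁ : μ₁ ∈ stdSimplex ℝ S) (hP : IsKernel H P) (hπ : IsPolicy π)
    (hπt : IsPolicy πt) {f g : ℕ → S → A → ℝ} (hfg : ∀ h < H, ∀ s a, f h s a ≤ g h s a) :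
    expF H P μ₁ π πt f ≤ expF H P μ₁ π πt g := by
  simp only [expF_eq_sum_dotProduct]
  refine sum_le_sum fun h hh => dotProduct_le_dotProduct_of_nonneg_left (fun s => ?_)
    (densF_mem_stdSimplex hμ₁ hP hπ hπt (mem_range.1 hh).le).1
  exact dotProduct_le_dotProduct_of_nonneg_left (hfg h (mem_range.1 hh) s) (hπt h s).1

lemma expF_le_mul (hμ₁ : μ₁ ∈ stdSimplex ℝ S) (hP : IsKernel H P) (hπ : IsPolicy π)
    (hπt : IsPolicy πt) {f : ℕ → S → A → ℝ} {c : ℝ} (hf : ∀ h < H, ∀ s a, f h s a ≤ c) :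
    expF H P μ₁ π πt f ≤ H * c := by
  rw [expF_eq_sum_dotProduct]
  refine (sum_le_sum (g := fun _ => c) ?_).trans_eq (by simp)
  refine fun h hh => dotProduct_le_of_le_const
    (densF_mem_stdSimplex hμ₁ hP hπ hπt (mem_range.1 hh).le) fun s => ?_
  exact dotProduct_le_of_le_const (hπt h s) (hf h (mem_range.1 hh) s)

lemma expF_mono_horizon (hμ₁ : μ₁ ∈ stdSimplex ℝ S) (hP : IsKernel H P) (hπ : IsPolicy π)
    (hπt : IsPolicy πt) {f : ℕ → S → A → ℝ} (hf : ∀ h < H, ∀ s a, 0 ≤ f h s a) {H' : ℕ}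
    (hH' : H' ≤ H) : expF H' P μ₁ π πt f ≤ expF H P μ₁ π πt f := by
  simp only [expF_eq_sum_dotProduct]
  refine sum_le_sum_of_subset_of_nonneg (range_subset_range.2 hH') fun h hh _ => ?_
  exact dotProduct_nonneg_of_nonneg (densF_mem_stdSimplex hμ₁ hP hπ hπt (mem_range.1 hh).le).1
    fun s => dotProduct_nonneg_of_nonneg (hπt h s).1 (hf h (mem_range.1 hh) s)

lemma expF_add (f g : ℕ → S → A → ℝ) :
    expF H P μ₁ π πt (fun h s a => f h s a + g h s a)
      = expF H P μ₁ π πt f + expF H P μ₁ π πt g := by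
  simp only [expF, mul_add, sum_add_distrib]

lemma expF_le_expF_add_sum_l1 (hμ₁ : μ₁ ∈ stdSimplex ℝ S) (hP : IsKernel H P)
    (hP' : IsKernel H P') (hπ : IsPolicy π) (hπ' : IsPolicy π') (hπt : IsPolicy πt)
    {g : ℕ → S → A → ℝ} (hg : ∀ h < H, ∀ s a, g h s a ∈ Set.Icc (0 : ℝ) 2) :
    expF H P μ₁ π πt g ≤ expF H P' μ₁ π' πt g
      + ∑ h ∈ range H, l1 (densF P μ₁ π πt h) (densF P' μ₁ π' πt h) := by
  simp only [expF_eq_sum_dotProduct, ← sum_add_distrib]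
  refine sum_le_sum fun h hh => dotProduct_le_add_l1
    (densF_mem_stdSimplex hμ₁ hP hπ hπt (mem_range.1 hh).le).2
    (densF_mem_stdSimplex hμ₁ hP' hπ' hπt (mem_range.1 hh).le).2 fun s => ?_
  have hgs := hg h (mem_range.1 hh) s
  exact ⟨dotProduct_nonneg_of_nonneg (hπt h s).1 fun a => (hgs a).1,
    dotProduct_le_of_le_const (hπt h s) fun a => (hgs a).2⟩

lemma expF_sum {ι : Type*} (t : Finset ι) (c : ι → ℝ) (g : ι → ℕ → S → A → ℝ) :
    expF H P μ₁ π πt (fun h s a => ∑ i ∈ t, c i * g i h s a)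
      = ∑ i ∈ t, c i * expF H P μ₁ π πt (g i) := by
  simp only [expF, mul_sum, mul_left_comm (c _)]
  exact (sum_congr rfl fun h _ => (sum_congr rfl fun s _ => sum_comm).trans sum_comm).trans
    sum_comm

lemma expF_le_of_le_sum_div (hμ₁ : μ₁ ∈ stdSimplex ℝ S) (hP : IsKernel H P)
    (hπ : IsPolicy π) (hπt : IsPolicy πt) {ι : Type*} {t : Finset ι} {w : ι → ℝ}
    (hw : ∀ i ∈ t, 0 ≤ w i) (hW : 0 < ∑ i ∈ t, w i) {f : ℕ → S → A → ℝ}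
    {g : ι → ℕ → S → A → ℝ} {B : ℝ}
    (hfg : ∀ h < H, ∀ s a, f h s a ≤ ∑ i ∈ t, w i / (∑ j ∈ t, w j) * g i h s a)
    (hg : ∀ i ∈ t, 0 < w i → expF H P μ₁ π πt (g i) ≤ B) :
    expF H P μ₁ π πt f ≤ B := calc
  _ ≤ ∑ i ∈ t, w i / (∑ j ∈ t, w j) * expF H P μ₁ π πt (g i) :=
    (expF_mono hμ₁ hP hπ hπt hfg).trans_eq (expF_sum _ _ _)
  _ ≤ ∑ i ∈ t, w i / (∑ j ∈ t, w j) * B := sum_le_sum fun i hi =>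
    (hw i hi).eq_or_lt.elim (fun h0 => by simp [← h0])
      fun hpos => mul_le_mul_of_nonneg_left (hg i hi hpos) (div_nonneg hpos.le hW.le)
  _ = B := by rw [← sum_mul, ← sum_div, div_self hW.ne', one_mul]

end Laws

section Perturbation

variable {S A : Type*} [Fintype S] [Fintype A] {H : ℕ} {P P' : ℕ → S → A → (S → ℝ) → S → ℝ}
  {μ₁ : S → ℝ} {π π' πt : ℕ → S → A → ℝ}

lemma l1_densF_le_expF (hμ₁ : μ₁ ∈ stdSimplex ℝ S) (hP : IsKernel H P) (hP' : IsKernel H P')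
    (hπ : IsPolicy π) (hπ' : IsPolicy π') (hπt : IsPolicy πt) {h : ℕ} (hh : h ≤ H) :
    l1 (densF P μ₁ π πt h) (densF P' μ₁ π' πt h) ≤ expF h P μ₁ π πt
      (fun k s a => l1 (P k s a (dens P μ₁ π k)) (P' k s a (dens P' μ₁ π' k))) := by
  induction h with
  | zero => simp [densF, expF]
  | succ h ih =>
    rw [densF_succ, densF_succ, expF_eq_sum_dotProduct, sum_range_succ,
      ← expF_eq_sum_dotProduct]
    have hstep := l1_vecMul_vecMul_le (ν' := densF P' μ₁ π' πt h)
      (K := fun s a => P h s a (dens P μ₁ π h))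
      (densF_mem_stdSimplex hμ₁ hP hπ hπt (h := h) (by omega)).1 (fun s => (hπt h s).1) (hπt h)
      fun s a => hP' h (by omega) s a _ (dens_mem_stdSimplex hμ₁ hP' hπ' (h := h) (by omega))
    simp only [l1_self, dotProduct_zero', add_zero] at hstep
    linarith [ih (by omega)]

lemma l1_densF_le_dCond (hμ₁ : μ₁ ∈ stdSimplex ℝ S) (hP : IsKernel H P) (hP' : IsKernel H P')
    (hπ : IsPolicy π) (hπt : IsPolicy πt) {h : ℕ} (hh : h ≤ H) :
    l1 (densF P μ₁ π πt h) (densF P' μ₁ π πt h) ≤ dCond H P P' μ₁ π πt :=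
  (l1_densF_le_expF hμ₁ hP hP' hπ hπ hπt hh).trans <|
    expF_mono_horizon hμ₁ hP hπ hπt (fun _ _ _ _ => l1_nonneg _ _) hh

lemma l1_dens_le_mul_geom_sum (hμ₁ : μ₁ ∈ stdSimplex ℝ S) (hP : IsKernel H P)
    (hπ : IsPolicy π) (hπ' : IsPolicy π') {L δ : ℝ} (hL : 0 ≤ L)
    (hlip : ∀ h < H, ∀ s a, ∀ μ ∈ stdSimplex ℝ S, ∀ μ' ∈ stdSimplex ℝ S,
      l1 (P h s a μ) (P h s a μ') ≤ L * l1 μ μ')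
    (hclose : ∀ h < H, ∀ s, l1 (π h s) (π' h s) ≤ δ) {h : ℕ} (hh : h ≤ H) :
    l1 (dens P μ₁ π h) (dens P μ₁ π' h) ≤ δ * ∑ k ∈ range h, (1 + L) ^ k := by
  induction h with
  | zero => simp [dens]
  | succ h ih =>
    have hν := dens_mem_stdSimplex hμ₁ hP hπ (h := h) (by omega)
    have hν' := dens_mem_stdSimplex hμ₁ hP hπ' (h := h) (by omega)
    have hstep := l1_vecMul_vecMul_le (ν' := dens P μ₁ π' h)
      (K := fun s a => P h s a (dens P μ₁ π h)) hν.1 (fun s => (hπ h s).1) (hπ' h) fun s a =>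
      hP h (by omega) s a _ hν'
    have hkernel : (dens P μ₁ π h ⬝ᵥ fun s => π h s ⬝ᵥ fun a =>
        l1 (P h s a (dens P μ₁ π h)) (P h s a (dens P μ₁ π' h)))
        ≤ L * l1 (dens P μ₁ π h) (dens P μ₁ π' h) :=
      dotProduct_le_of_le_const hν fun s => dotProduct_le_of_le_const (hπ h s) fun a =>
        hlip h (by omega) s a _ hν _ hν'
    have hpolicy : (dens P μ₁ π h ⬝ᵥ fun s => l1 (π h s) (π' h s)) ≤ δ :=
      dotProduct_le_of_le_const hν (hclose h (by omega))
    rw [dens_succ, dens_succ, geom_sum_succ]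
    nlinarith [ih (by omega)]

end Perturbation

lemma mul_geom_sum_le {L : ℝ} (hL : 0 ≤ L) {h H : ℕ} (hh : h ≤ H) :
    L * ∑ k ∈ range h, (1 + L) ^ k ≤ (1 + L) ^ H - 1 := by
  have := geom_sum_mul (1 + L) h
  rw [add_sub_cancel_left] at this
  rw [mul_comm, this]
  linarith [pow_le_pow_right₀ (le_add_of_nonneg_right hL) hh]

lemma geom_sum_le_mul_pow {L : ℝ} (hL : 0 ≤ L) {h H : ℕ} (hh : h ≤ H) :
    ∑ k ∈ range h, (1 + L) ^ k ≤ H * (1 + L) ^ H := by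
  calc ∑ k ∈ range h, (1 + L) ^ k ≤ ∑ k ∈ range h, (1 + L) ^ H :=
        sum_le_sum fun k hk => pow_le_pow_right₀ (le_add_of_nonneg_right hL)
          ((mem_range.1 hk).le.trans hh)
    _ = h * (1 + L) ^ H := by simp
    _ ≤ H * (1 + L) ^ H := by gcongr

section ThreeModels

variable {S A : Type*} [Fintype S] [Fintype A] {H : ℕ} {Pc Pm Pc' : ℕ → S → A → (S → ℝ) → S → ℝ}
  {μ₁ : S → ℝ} {π π' πt : ℕ → S → A → ℝ} {L δ ε₀ : ℝ}

/-- The middle leg only moves the density of `Pm` from `π` to `π'`; the last leg is transported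
from the law of `πt` in `(Pc, π)` to its law in `(Pm, π')`, at the price of their ℓ1 distance. -/
lemma expF_l1_le_of_mid (hμ₁ : μ₁ ∈ stdSimplex ℝ S) (hPc : IsKernel H Pc)
    (hPm : IsKernel H Pm) (hPc' : IsKernel H Pc') (hπ : IsPolicy π) (hπ' : IsPolicy π')
    (hπt : IsPolicy πt) {D : ℝ}
    (hD : ∀ h < H, ∀ s a, l1 (Pm h s a (dens Pm μ₁ π h)) (Pm h s a (dens Pm μ₁ π' h)) ≤ D) :
    expF H Pc μ₁ π πt (fun h s a => l1 (Pc h s a (dens Pc μ₁ π h)) (Pc' h s a (dens Pc' μ₁ π' h)))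
      ≤ dCond H Pc Pm μ₁ π πt + dCond H Pm Pc' μ₁ π' πt
        + H * (dCond H Pm Pc μ₁ π πt + (H + 1) * D) := by
  have hlaw : ∀ h < H, l1 (densF Pc μ₁ π πt h) (densF Pm μ₁ π' πt h)
      ≤ dCond H Pm Pc μ₁ π πt + H * D := by
    intro h hh
    have hdrift := (l1_densF_le_expF hμ₁ hPm hPm hπ hπ' hπt hh.le).trans <|
      (expF_mono_horizon hμ₁ hPm hπ hπt (fun _ _ _ _ => l1_nonneg _ _) hh.le).trans
        (expF_le_mul hμ₁ hPm hπ hπt hD)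
    linarith [l1_triangle (densF Pc μ₁ π πt h) (densF Pm μ₁ π πt h) (densF Pm μ₁ π' πt h),
      l1_comm (densF Pc μ₁ π πt h) (densF Pm μ₁ π πt h),
      l1_densF_le_dCond hμ₁ hPm hPc hπ hπt hh.le]
  have hsplit : ∀ h < H, ∀ s a,
      l1 (Pc h s a (dens Pc μ₁ π h)) (Pc' h s a (dens Pc' μ₁ π' h))
        ≤ l1 (Pc h s a (dens Pc μ₁ π h)) (Pm h s a (dens Pm μ₁ π h))
          + l1 (Pm h s a (dens Pm μ₁ π h)) (Pm h s a (dens Pm μ₁ π' h))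
          + l1 (Pm h s a (dens Pm μ₁ π' h)) (Pc' h s a (dens Pc' μ₁ π' h)) := fun h _ s a =>
    (l1_triangle _ _ _).trans (add_le_add (l1_triangle _ _ _) le_rfl)
  have hlast := expF_le_expF_add_sum_l1 hμ₁ hPc hPm hπ hπ' hπt (g := fun h s a =>
      l1 (Pm h s a (dens Pm μ₁ π' h)) (Pc' h s a (dens Pc' μ₁ π' h))) fun h hh s a =>
    ⟨l1_nonneg _ _, l1_le_two (hPm h hh s a _ (dens_mem_stdSimplex hμ₁ hPm hπ' hh.le))
      (hPc' h hh s a _ (dens_mem_stdSimplex hμ₁ hPc' hπ' hh.le))⟩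
  have hlaws := sum_le_sum fun h hh => hlaw h (mem_range.1 hh)
  rw [sum_const, card_range, nsmul_eq_mul] at hlaws
  have hmid := expF_le_mul hμ₁ hPc hπ hπt hD
  have := expF_mono hμ₁ hPc hπ hπt hsplit
  rw [expF_add, expF_add] at this
  unfold dCond at hlaws ⊢
  linarith

lemma expF_l1_le_of_mid_of_close (hμ₁ : μ₁ ∈ stdSimplex ℝ S) (hPc : IsKernel H Pc)
    (hPm : IsKernel H Pm) (hPc' : IsKernel H Pc') (hπ : IsPolicy π) (hπ' : IsPolicy π')
    (hπt : IsPolicy πt) (hL : 0 ≤ L)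
    (hlip : ∀ h < H, ∀ s a, ∀ μ ∈ stdSimplex ℝ S, ∀ μ' ∈ stdSimplex ℝ S,
      l1 (Pm h s a μ) (Pm h s a μ') ≤ L * l1 μ μ')
    (hδ : 0 ≤ δ) (hclose : ∀ h < H, ∀ s, l1 (π h s) (π' h s) ≤ δ)
    (hδε : H * (H + 1) * ((1 + L) ^ H - 1) * δ ≤ ε₀)
    (hcm : dCond H Pc Pm μ₁ π πt ≤ ε₀) (hmc : dCond H Pm Pc μ₁ π πt ≤ ε₀)
    (hmc' : dCond H Pm Pc' μ₁ π' πt ≤ ε₀) :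
    expF H Pc μ₁ π πt (fun h s a => l1 (Pc h s a (dens Pc μ₁ π h)) (Pc' h s a (dens Pc' μ₁ π' h)))
      ≤ (H + 3) * ε₀ := by
  have hD : ∀ h < H, ∀ s a, l1 (Pm h s a (dens Pm μ₁ π h)) (Pm h s a (dens Pm μ₁ π' h))
      ≤ δ * ((1 + L) ^ H - 1) := fun h hh s a => calc
    _ ≤ L * l1 (dens Pm μ₁ π h) (dens Pm μ₁ π' h) :=
      hlip h hh s a _ (dens_mem_stdSimplex hμ₁ hPm hπ hh.le) _
        (dens_mem_stdSimplex hμ₁ hPm hπ' hh.le)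
    _ ≤ L * (δ * ∑ k ∈ range h, (1 + L) ^ k) := mul_le_mul_of_nonneg_left
      (l1_dens_le_mul_geom_sum hμ₁ hPm hπ hπ' hL hlip hclose hh.le) hL
    _ = δ * (L * ∑ k ∈ range h, (1 + L) ^ k) := by ring
    _ ≤ δ * ((1 + L) ^ H - 1) := mul_le_mul_of_nonneg_left (mul_geom_sum_le hL hh.le) hδ
  have hH : (H : ℝ) * dCond H Pm Pc μ₁ π πt ≤ H * ε₀ :=
    mul_le_mul_of_nonneg_left hmc H.cast_nonneg
  linarith [expF_l1_le_of_mid hμ₁ hPc hPm hPc' hπ hπ' hπt hD]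

lemma l1_dens_le_of_mid_of_close (hμ₁ : μ₁ ∈ stdSimplex ℝ S) (hPc : IsKernel H Pc)
    (hPm : IsKernel H Pm) (hPc' : IsKernel H Pc') (hπ : IsPolicy π) (hπ' : IsPolicy π')
    (hL : 0 ≤ L)
    (hlip : ∀ h < H, ∀ s a, ∀ μ ∈ stdSimplex ℝ S, ∀ μ' ∈ stdSimplex ℝ S,
      l1 (Pm h s a μ) (Pm h s a μ') ≤ L * l1 μ μ')
    (hδ : 0 ≤ δ) (hclose : ∀ h < H, ∀ s, l1 (π h s) (π' h s) ≤ δ)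
    (hδε : H * (H + 1) * ((1 + L) ^ H - 1) * δ ≤ ε₀) (hδε' : H * δ ≤ ε₀)
    (hmc : dCond H Pm Pc μ₁ π π ≤ ε₀) (hmc' : dCond H Pm Pc' μ₁ π' π' ≤ ε₀)
    {h : ℕ} (hh : h ≤ H) :
    l1 (dens Pc μ₁ π h) (dens Pc' μ₁ π' h) ≤ 4 * ε₀ := by
  have hX : 0 ≤ (1 + L) ^ H - 1 := sub_nonneg.2 (one_le_pow₀ (le_add_of_nonneg_right hL))
  have hmid : l1 (dens Pm μ₁ π h) (dens Pm μ₁ π' h) ≤ 2 * ε₀ := calc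
    _ ≤ δ * ∑ k ∈ range h, (1 + L) ^ k :=
      l1_dens_le_mul_geom_sum hμ₁ hPm hπ hπ' hL hlip hclose hh
    _ ≤ δ * (H * (1 + L) ^ H) := mul_le_mul_of_nonneg_left (geom_sum_le_mul_pow hL hh) hδ
    _ = H * δ + H * ((1 + L) ^ H - 1) * δ := by ring
    _ ≤ 2 * ε₀ := by
      have : 0 ≤ (H : ℝ) * H * ((1 + L) ^ H - 1) * δ := by positivity
      linarith
  have hc : l1 (dens Pc μ₁ π h) (dens Pm μ₁ π h) ≤ ε₀ := by
    rw [l1_comm, dens_eq_densF, dens_eq_densF]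
    exact (l1_densF_le_dCond hμ₁ hPm hPc hπ hπ hh).trans hmc
  have hc' : l1 (dens Pm μ₁ π' h) (dens Pc' μ₁ π' h) ≤ ε₀ := by
    rw [dens_eq_densF, dens_eq_densF]
    exact (l1_densF_le_dCond hμ₁ hPm hPc' hπ' hπ' hh).trans hmc'
  linarith [l1_triangle (dens Pc μ₁ π h) (dens Pm μ₁ π h) (dens Pc' μ₁ π' h),
    l1_triangle (dens Pm μ₁ π h) (dens Pm μ₁ π' h) (dens Pc' μ₁ π' h)]

lemma expF_abs_sub_le_of_mid_of_close (hμ₁ : μ₁ ∈ stdSimplex ℝ S) (hPc : IsKernel H Pc)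
    (hPm : IsKernel H Pm) (hPc' : IsKernel H Pc') (hπ : IsPolicy π) (hπ' : IsPolicy π')
    (hπt : IsPolicy πt) (hL : 0 ≤ L)
    (hlip : ∀ h < H, ∀ s a, ∀ μ ∈ stdSimplex ℝ S, ∀ μ' ∈ stdSimplex ℝ S,
      l1 (Pm h s a μ) (Pm h s a μ') ≤ L * l1 μ μ')
    (hδ : 0 ≤ δ) (hclose : ∀ h < H, ∀ s, l1 (π h s) (π' h s) ≤ δ)
    (hδε : H * (H + 1) * ((1 + L) ^ H - 1) * δ ≤ ε₀) (hδε' : H * δ ≤ ε₀)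
    (hmc : dCond H Pm Pc μ₁ π π ≤ ε₀) (hmc' : dCond H Pm Pc' μ₁ π' π' ≤ ε₀)
    {r : ℕ → S → A → (S → ℝ) → ℝ} {Lr : ℝ} (hLr : 0 ≤ Lr)
    (hrlip : ∀ h < H, ∀ s a, ∀ μ ∈ stdSimplex ℝ S, ∀ μ' ∈ stdSimplex ℝ S,
      |r h s a μ - r h s a μ'| ≤ Lr * l1 μ μ') :
    expF H Pc μ₁ π πt (fun h s a => |r h s a (dens Pc μ₁ π h) - r h s a (dens Pc' μ₁ π' h)|)
      ≤ H * (Lr * (4 * ε₀)) :=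
  expF_le_mul hμ₁ hPc hπ hπt fun h hh s a =>
    (hrlip h hh s a _ (dens_mem_stdSimplex hμ₁ hPc hπ hh.le) _
      (dens_mem_stdSimplex hμ₁ hPc' hπ' hh.le)).trans <| mul_le_mul_of_nonneg_left
        (l1_dens_le_of_mid_of_close hμ₁ hPc hPm hPc' hπ hπ' hL hlip hδ hclose hδε hδε' hmc hmc'
          hh.le) hLr

end ThreeModels

lemma inter_nonempty_of_card_lt_two_mul_ncard {ι : Type*} [Fintype ι] {s t : Set ι}
    (hs : Fintype.card ι < 2 * s.ncard) (ht : Fintype.card ι < 2 * t.ncard) :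
    (s ∩ t).Nonempty := by
  rw [Set.nonempty_iff_ne_empty]
  intro hst
  have hunion := Set.ncard_union_add_ncard_inter s t
  have hcard : (s ∪ t).ncard ≤ Fintype.card ι := by
    simpa [Nat.card_eq_fintype_card] using Set.ncard_le_ncard (Set.subset_univ (s ∪ t))
  rw [hst, Set.ncard_empty] at hunion
  omega

section PolicyDistance

variable {S A : Type*} [Fintype A] {H : ℕ} {π π' : ℕ → S → A → ℝ}

lemma l1_le_dInf (hπ : IsPolicy π) (hπ' : IsPolicy π') {h : ℕ} (hh : h < H) (s : S) :
    l1 (π h s) (π' h s) ≤ dInf H π π' := by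
  refine le_csSup ⟨2, ?_⟩ ⟨h, hh, s, rfl⟩
  rintro x ⟨k, -, t, rfl⟩
  exact l1_le_two (hπ k t) (hπ' k t)

lemma dInf_le {c : ℝ} (hc : 0 ≤ c) (hb : ∀ h < H, ∀ s, l1 (π h s) (π' h s) ≤ c) :
    dInf H π π' ≤ c :=
  Real.sSup_le (by rintro x ⟨h, hh, s, rfl⟩; exact hb h hh s) hc

lemma sum_max_two_mul_sub_dInf_pos {ε : ℝ} (hε : 0 < ε) {t : Finset (ℕ → S → A → ℝ)}
    (hcover : ∃ π' ∈ t, ∀ h < H, ∀ s, l1 (π h s) (π' h s) ≤ ε) :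
    0 < ∑ π' ∈ t, max (2 * ε - dInf H π π') 0 := by
  obtain ⟨π', hπ't, hclose⟩ := hcover
  refine sum_pos' (fun _ _ => le_max_right _ _) ⟨π', hπ't, ?_⟩
  linarith [le_max_left (2 * ε - dInf H π π') 0, dInf_le hε.le hclose]

lemma l1_le_of_max_two_mul_sub_dInf_pos (hπ : IsPolicy π) (hπ' : IsPolicy π') {ε : ℝ}
    (hw : 0 < max (2 * ε - dInf H π π') 0) {h : ℕ} (hh : h < H) (s : S) :
    l1 (π h s) (π' h s) ≤ 2 * ε := by
  have : dInf H π π' < 2 * ε := by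
    by_contra! hge
    rw [max_eq_right (by linarith)] at hw
    exact hw.false
  linarith [l1_le_dInf hπ hπ' hh s]

end PolicyDistance

theorem bridge_model_construction_general {S A ι : Type*} [Fintype S] [Fintype A] [Fintype ι]
    (H : ℕ)
    (P : ι → ℕ → S → A → (S → ℝ) → S → ℝ) (r : ℕ → S → A → (S → ℝ) → ℝ)
    (μ₁ : S → ℝ) (hμ₁ : μ₁ ∈ stdSimplex ℝ S)
    (hPker : ∀ m, IsKernel H (P m))
    (L_T L_r : ℝ) (hLT : 0 < L_T) (hLr : 0 < L_r)
    -- global Lipschitz continuity of transitions and rewards in the density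
    (hPlip : ∀ m, ∀ h, h < H → ∀ s a, ∀ μ ∈ stdSimplex ℝ S, ∀ μ' ∈ stdSimplex ℝ S,
      l1 (P m h s a μ) (P m h s a μ') ≤ L_T * l1 μ μ')
    (hrlip : ∀ h, h < H → ∀ s a, ∀ μ ∈ stdSimplex ℝ S, ∀ μ' ∈ stdSimplex ℝ S,
      |r h s a μ - r h s a μ'| ≤ L_r * l1 μ μ')
    (ε₀ : ℝ)
    -- a fixed central model for each policy
    (MCtr : (ℕ → S → A → ℝ) → ι)
    -- every central model has strictly more than half of the models as neighbors
    (hHalf : ∀ π, IsPolicy π →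
      Fintype.card ι < 2 * (nbhd H P μ₁ ε₀ π (MCtr π)).ncard)
    -- the resolution ε̄ of the policy cover
    (εb : ℝ) (hεb : 0 < εb)
    (hεb1 : 2 * H * (H + 1) * ((1 + L_T) ^ H - 1) * εb ≤ ε₀)
    (hεb2 : 2 * H * εb ≤ ε₀)
    -- a finite ε̄-cover of the policy space w.r.t. d_{∞,1}
    (Pcov : Finset (ℕ → S → A → ℝ)) (hPcovpol : ∀ πt ∈ Pcov, IsPolicy πt)
    (hcover : ∀ π : ℕ → S → A → ℝ, IsPolicy π →
      ∃ πt ∈ Pcov, ∀ h, h < H → ∀ s, l1 (π h s) (πt h s) ≤ εb)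
    -- the bridge model
    (PBr : ℕ → S → A → (ℕ → S → A → ℝ) → S → ℝ)
    (rBr : ℕ → S → A → (ℕ → S → A → ℝ) → ℝ)
    (hPBr : ∀ h s a π s', PBr h s a π s' =
      (∑ πt ∈ Pcov, max (2 * εb - dInf H π πt) 0 *
          P (MCtr πt) h s a (dens (P (MCtr πt)) μ₁ πt h) s') /
        ∑ πt ∈ Pcov, max (2 * εb - dInf H π πt) 0)
    (hrBr : ∀ h s a π, rBr h s a π =
      (∑ πt ∈ Pcov, max (2 * εb - dInf H π πt) 0 *
          r h s a (dens (P (MCtr πt)) μ₁ πt h)) /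
        ∑ πt ∈ Pcov, max (2 * εb - dInf H π πt) 0) :
    -- the bridge model is well defined: the denominator is strictly positive
    (∀ π : ℕ → S → A → ℝ, IsPolicy π →
      0 < ∑ πt ∈ Pcov, max (2 * εb - dInf H π πt) 0) ∧
    -- transition approximation error of the bridge model against each central model
    (∀ π : ℕ → S → A → ℝ, IsPolicy π → ∀ πt, IsPolicy πt →
      expF H (P (MCtr π)) μ₁ π πt (fun h s a =>
          l1 (P (MCtr π) h s a (dens (P (MCtr π)) μ₁ π h)) (PBr h s a π))
        ≤ (H + 3) * ε₀) ∧
    -- reward approximation error of the bridge model against each central model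
    (∀ π : ℕ → S → A → ℝ, IsPolicy π → ∀ πt, IsPolicy πt →
      expF H (P (MCtr π)) μ₁ π πt (fun h s a =>
          |r h s a (dens (P (MCtr π)) μ₁ π h) - rBr h s a π|)
        ≤ L_r * H * (H + 4) * ε₀) := by
  have hW (π : ℕ → S → A → ℝ) (hπ : IsPolicy π) :
      0 < ∑ πt ∈ Pcov, max (2 * εb - dInf H π πt) 0 :=
    sum_max_two_mul_sub_dInf_pos hεb (hcover π hπ)
  have hw (π πt : ℕ → S → A → ℝ) : 0 ≤ max (2 * εb - dInf H π πt) 0 := le_max_right _ _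
  have hmid (π πc : ℕ → S → A → ℝ) (hπ : IsPolicy π) (hπc : IsPolicy πc) :
      (nbhd H P μ₁ ε₀ π (MCtr π) ∩ nbhd H P μ₁ ε₀ πc (MCtr πc)).Nonempty :=
    inter_nonempty_of_card_lt_two_mul_ncard (hHalf π hπ) (hHalf πc hπc)
  have hδε : H * (H + 1) * ((1 + L_T) ^ H - 1) * (2 * εb) ≤ ε₀ := by linarith
  refine ⟨hW, fun π hπ πt hπt => ?_, fun π hπ πt hπt => ?_⟩
  · refine expF_le_of_le_sum_div hμ₁ (hPker _) hπ hπt (fun _ _ => hw _ _) (hW π hπ)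
      (g := fun πc h s a => l1 (P (MCtr π) h s a (dens (P (MCtr π)) μ₁ π h))
        (P (MCtr πc) h s a (dens (P (MCtr πc)) μ₁ πc h)))
      (fun h _ s a => ?_) fun πc hπc hpos => ?_
    · rw [show PBr h s a π = _ from funext (hPBr h s a π)]
      exact l1_div_sum_le (fun _ _ => hw _ _) (hW π hπ) _ _
    · obtain ⟨m, hm, hm'⟩ := hmid π πc hπ (hPcovpol πc hπc)
      exact expF_l1_le_of_mid_of_close hμ₁ (hPker _) (hPker m) (hPker _) hπ (hPcovpol πc hπc)
        hπt hLT.le (hPlip m) (by positivity)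
        (fun h hh s => l1_le_of_max_two_mul_sub_dInf_pos hπ (hPcovpol πc hπc) hpos hh s) hδε
        (hm πt hπt).1 (hm πt hπt).2 (hm' πt hπt).2
  · refine expF_le_of_le_sum_div hμ₁ (hPker _) hπ hπt (fun _ _ => hw _ _) (hW π hπ)
      (g := fun πc h s a => |r h s a (dens (P (MCtr π)) μ₁ π h)
        - r h s a (dens (P (MCtr πc)) μ₁ πc h)|)
      (fun h _ s a => ?_) fun πc hπc hpos => ?_
    · rw [hrBr]
      exact abs_sub_div_sum_le (fun _ _ => hw _ _) (hW π hπ) _ _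
    · obtain ⟨m, hm, hm'⟩ := hmid π πc hπ (hPcovpol πc hπc)
      have hε₀ : 0 ≤ ε₀ := by nlinarith [H.cast_nonneg (α := ℝ)]
      have : 0 ≤ L_r * H * H * ε₀ := by positivity
      refine (expF_abs_sub_le_of_mid_of_close hμ₁ (hPker _) (hPker m) (hPker _) hπ
        (hPcovpol πc hπc) hπt hLT.le (hPlip m) (by positivity)
        (fun h hh s => l1_le_of_max_two_mul_sub_dInf_pos hπ (hPcovpol πc hπc) hpos hh s) hδε
        (by linarith) (hm π hπ).2 (hm' πc (hPcovpol πc hπc)).2 hLr.le hrlip).trans ?_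
      linarith

/-- **Bridge model construction: well-definedness and approximation error.**
Under the global Lipschitz conditions, if for every policy the central model has strictly
more than half of the models in its `ε₀`-neighborhood, then the bridge model built by
`w_π`-weighted interpolation over an `ε̄`-cover is well defined, and for every reference
policy `π` its transitions and rewards are `(H+3)ε₀`- resp. `L_r·H·(H+4)ε₀`-close to those of
the central model of `π`, uniformly over roll-out policies. -/
theorem bridge_model_construction {S A ι : Type*} [Fintype S] [Fintype A] [Fintype ι]
    [Nonempty ι] (H : ℕ)
    (P : ι → ℕ → S → A → (S → ℝ) → S → ℝ) (r : ℕ → S → A → (S → ℝ) → ℝ)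
    (μ₁ : S → ℝ) (hμ₁ : μ₁ ∈ stdSimplex ℝ S)
    (hPker : ∀ m, IsKernel H (P m))
    (L_T L_r : ℝ) (hLT : 0 < L_T) (hLr : 0 < L_r)
    -- global Lipschitz continuity of transitions and rewards in the density
    (hPlip : ∀ m, ∀ h, h < H → ∀ s a, ∀ μ ∈ stdSimplex ℝ S, ∀ μ' ∈ stdSimplex ℝ S,
      l1 (P m h s a μ) (P m h s a μ') ≤ L_T * l1 μ μ')
    (hrbd : ∀ h, h < H → ∀ s a (μ : S → ℝ), μ ∈ stdSimplex ℝ S →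
      r h s a μ ∈ Set.Icc (0 : ℝ) (1 / (H : ℝ)))
    (hrlip : ∀ h, h < H → ∀ s a, ∀ μ ∈ stdSimplex ℝ S, ∀ μ' ∈ stdSimplex ℝ S,
      |r h s a μ - r h s a μ'| ≤ L_r * l1 μ μ')
    (ε₀ : ℝ) (hε₀ : 0 < ε₀)
    -- a fixed central model for each policy
    (MCtr : (ℕ → S → A → ℝ) → ι)
    (hCtrMax : ∀ π, IsPolicy π → ∀ m : ι,
      (nbhd H P μ₁ ε₀ π m).ncard ≤ (nbhd H P μ₁ ε₀ π (MCtr π)).ncard)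
    -- every central model has strictly more than half of the models as neighbors
    (hHalf : ∀ π, IsPolicy π →
      Fintype.card ι < 2 * (nbhd H P μ₁ ε₀ π (MCtr π)).ncard)
    -- the resolution ε̄ of the policy cover
    (εb : ℝ) (hεb : 0 < εb)
    (hεb1 : 2 * H * (H + 1) * ((1 + L_T) ^ H - 1) * εb ≤ ε₀)
    (hεb2 : 2 * H * εb ≤ ε₀)
    -- a finite ε̄-cover of the policy space w.r.t. d_{∞,1}
    (Pcov : Finset (ℕ → S → A → ℝ)) (hPcovpol : ∀ πt ∈ Pcov, IsPolicy πt)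
    (hcover : ∀ π : ℕ → S → A → ℝ, IsPolicy π →
      ∃ πt ∈ Pcov, ∀ h, h < H → ∀ s, l1 (π h s) (πt h s) ≤ εb)
    -- the bridge model
    (PBr : ℕ → S → A → (ℕ → S → A → ℝ) → S → ℝ)
    (rBr : ℕ → S → A → (ℕ → S → A → ℝ) → ℝ)
    (hPBr : ∀ h s a π s', PBr h s a π s' =
      (∑ πt ∈ Pcov, max (2 * εb - dInf H π πt) 0 *
          P (MCtr πt) h s a (dens (P (MCtr πt)) μ₁ πt h) s') /
        ∑ πt ∈ Pcov, max (2 * εb - dInf H π πt) 0)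
    (hrBr : ∀ h s a π, rBr h s a π =
      (∑ πt ∈ Pcov, max (2 * εb - dInf H π πt) 0 *
          r h s a (dens (P (MCtr πt)) μ₁ πt h)) /
        ∑ πt ∈ Pcov, max (2 * εb - dInf H π πt) 0) :
    -- the bridge model is well defined: the denominator is strictly positive
    (∀ π : ℕ → S → A → ℝ, IsPolicy π →
      0 < ∑ πt ∈ Pcov, max (2 * εb - dInf H π πt) 0) ∧
    -- transition approximation error of the bridge model against each central model
    (∀ π : ℕ → S → A → ℝ, IsPolicy π → ∀ πt, IsPolicy πt →
      expF H (P (MCtr π)) μ₁ π πt (fun h s a =>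
          l1 (P (MCtr π) h s a (dens (P (MCtr π)) μ₁ π h)) (PBr h s a π))
        ≤ (H + 3) * ε₀) ∧
    -- reward approximation error of the bridge model against each central model
    (∀ π : ℕ → S → A → ℝ, IsPolicy π → ∀ πt, IsPolicy πt →
      expF H (P (MCtr π)) μ₁ π πt (fun h s a =>
          |r h s a (dens (P (MCtr π)) μ₁ π h) - rBr h s a π|)
        ≤ L_r * H * (H + 4) * ε₀) :=
  bridge_model_construction_general H P r μ₁ hμ₁ hPker L_T L_r hLT hLr hPlip hrlip ε₀ MCtr hHalf εb
    hεb hεb1 hεb2 Pcov hPcovpol hcover PBr rBr hPBr hrBr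
end

section
/- Let X be a finite set, let p be a probability distribution on X, and let X₁,…,X_N be independent samples from p. Let p̂ be the empirical distribution, p̂(x) := (1/N)·|{n ∈ {1,…,N} : X_n = x}|. For any ε ∈ (0,1) and δ ∈ (0,1), if N ≥ max{8|X|/ε², (8/ε²)·log(2/δ)}, then Pr(‖p − p̂‖₁ ≥ ε) ≤ δ. (Concentration of the empirical distribution in ℓ1 distance.) -/
open MeasureTheory ProbabilityTheory Real Finset
open scoped Classical

/-!
Write `f := p - p̂`. Since both `p` and `p̂` have total mass one, `‖f‖₁ = 2 f(A)` for
`A = {x | p̂ x ≤ p x}`, so `‖p - p̂‖₁ ≥ ε` forces `p(A) - p̂(A) ≥ ε / 2` for one of the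
`2 ^ |X|` subsets `A ⊆ X`. For a fixed `A`, `N p̂(A)` is a sum of `N` independent indicators
with mean `p(A)`, so Hoeffding's inequality bounds that event by `exp (-N ε² / 2)`. The union
bound gives `2 ^ |X| exp (-N ε² / 2)`, which the condition on `N` makes at most `δ`.
-/

noncomputable def empiricalFreq {X : Type*} {N : ℕ} (s : Fin N → X) (x : X) : ℝ :=
  #{n | s n = x} / N

section EmpiricalFreq

variable {X : Type*} {N : ℕ} (s : Fin N → X)

lemma sum_empiricalFreq (A : Finset X) : ∑ x ∈ A, empiricalFreq s x = #{n | s n ∈ A} / N := by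
  simp only [empiricalFreq, ← sum_div, card_filter]
  push_cast
  rw [sum_comm]
  simp [sum_ite_eq]

lemma sum_empiricalFreq_univ [Fintype X] (hN : N ≠ 0) : ∑ x, empiricalFreq s x = 1 := by
  rw [sum_empiricalFreq]
  simp [hN]

end EmpiricalFreq

lemma sum_abs_eq_two_mul_sum_filter_nonneg {ι : Type*} (s : Finset ι) {f : ι → ℝ}
    (hf : ∑ i ∈ s, f i = 0) : ∑ i ∈ s, |f i| = 2 * ∑ i ∈ s with 0 ≤ f i, f i := by
  have hpos : ∑ i ∈ s with 0 ≤ f i, |f i| = ∑ i ∈ s with 0 ≤ f i, f i :=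
    sum_congr rfl fun i hi => abs_of_nonneg (mem_filter.1 hi).2
  have hneg : ∑ i ∈ s with ¬0 ≤ f i, |f i| = -∑ i ∈ s with ¬0 ≤ f i, f i := by
    rw [← sum_neg_distrib]
    exact sum_congr rfl fun i hi => abs_of_neg (not_le.1 (mem_filter.1 hi).2)
  have hsplit := sum_filter_add_sum_filter_not s (0 ≤ f ·) f
  rw [← sum_filter_add_sum_filter_not s (0 ≤ f ·), hpos, hneg]
  linarith

lemma exists_sum_abs_sub_eq_two_mul {X : Type*} [Fintype X] {p q : X → ℝ}
    (h : ∑ x, p x = ∑ x, q x) :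
    ∃ A : Finset X, ∑ x, |p x - q x| = 2 * (∑ x ∈ A, p x - ∑ x ∈ A, q x) := by
  refine ⟨({x | 0 ≤ p x - q x} : Finset X), ?_⟩
  rw [← sum_sub_distrib]
  exact sum_abs_eq_two_mul_sum_filter_nonneg univ (by rw [sum_sub_distrib, h, sub_self])

section Sample

variable {Ω X : Type*} [MeasurableSpace Ω] {μ : Measure Ω} [MeasurableSpace X]

lemma measureReal_preimage_finset_eq_sum [MeasurableSingletonClass X] {Y : Ω → X}
    (hY : Measurable Y) [IsFiniteMeasure μ] {p : X → ℝ} (hp : ∀ x, 0 ≤ p x)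
    (hlaw : ∀ x, μ {ω | Y ω = x} = ENNReal.ofReal (p x)) (A : Finset X) :
    μ.real (Y ⁻¹' A) = ∑ x ∈ A, p x := by
  rw [← sum_measureReal_preimage_singleton A fun x _ => hY (measurableSet_singleton x)]
  refine sum_congr rfl fun x _ => ?_
  simp only [measureReal_def, Set.preimage, Set.mem_singleton_iff, hlaw,
    ENNReal.toReal_ofReal (hp x)]

variable [IsProbabilityMeasure μ]

lemma hasSubgaussianMGF_sub_indicator {Y : Ω → X} (hY : Measurable Y) {A : Set X}
    (hA : MeasurableSet A) {q : ℝ} (hq : μ.real (Y ⁻¹' A) = q) :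
    HasSubgaussianMGF (fun ω => q - A.indicator 1 (Y ω)) 4⁻¹ μ := by
  have hind : AEMeasurable (fun ω => A.indicator (1 : X → ℝ) (Y ω)) μ :=
    ((measurable_one.indicator hA).comp hY).aemeasurable
  have hmean : μ[fun ω => A.indicator (1 : X → ℝ) (Y ω)] = q := by
    rw [← hq, ← integral_indicator_one (hY hA)]
    rfl
  convert (hasSubgaussianMGF_of_mem_Icc (a := 0) (b := 1) hind
    (ae_of_all _ fun ω => ?_)).neg using 1
  · ext ω
    simp [hmean]
  · norm_num
  · exact ⟨Set.indicator_nonneg (fun _ _ => zero_le_one) _,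
      Set.indicator_le_self' (fun _ _ => zero_le_one) _⟩

variable {N : ℕ} {ξ : Fin N → Ω → X}

lemma measureReal_sub_freq_ge_le (hmeas : ∀ n, Measurable (ξ n)) (hindep : iIndepFun ξ μ)
    {A : Set X} [DecidablePred (· ∈ A)] (hA : MeasurableSet A) {q : ℝ}
    (hq : ∀ n, μ.real (ξ n ⁻¹' A) = q) {t : ℝ} (ht : 0 ≤ t) :
    μ.real {ω | t ≤ q - #{n | ξ n ω ∈ A} / N} ≤ exp (-2 * N * t ^ 2) := by
  obtain rfl | hN := N.eq_zero_or_pos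
  · simp
  set Y : Fin N → Ω → ℝ := fun n ω => q - A.indicator 1 (ξ n ω) with hY
  have hindepY : iIndepFun Y μ :=
    hindep.comp (fun _ x => q - A.indicator 1 x)
      (fun _ => measurable_const.sub (measurable_one.indicator hA))
  have hsum : ∀ ω, ∑ n, Y n ω = N * q - #{n | ξ n ω ∈ A} := by
    intro ω
    simp [hY, sum_sub_distrib, Set.indicator_apply]
  have hNr : (0 : ℝ) < N := by exact_mod_cast hN
  calc μ.real {ω | t ≤ q - #{n | ξ n ω ∈ A} / N}
      = μ.real {ω | N * t ≤ ∑ n ∈ univ, Y n ω} := by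
        congr 1; ext ω
        rw [Set.mem_ofPred_eq, Set.mem_ofPred_eq, hsum, le_sub_iff_add_le, ← le_sub_iff_add_le',
          div_le_iff₀ hNr]
        constructor <;> intro h <;> linarith
    _ ≤ exp (-(N * t) ^ 2 / (2 * ∑ n ∈ univ, (4⁻¹ : NNReal))) :=
        HasSubgaussianMGF.measure_sum_ge_le_of_iIndepFun hindepY
          (fun n _ => hasSubgaussianMGF_sub_indicator (hmeas n) hA (hq n)) (by positivity)
    _ = exp (-2 * N * t ^ 2) := by
        simp only [sum_const, card_univ, Fintype.card_fin, nsmul_eq_mul, NNReal.coe_mul,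
          NNReal.coe_natCast, NNReal.coe_inv, NNReal.coe_ofNat]
        congr 1
        field_simp
        ring

end Sample

lemma two_pow_mul_exp_neg_le {k : ℕ} {a δ : ℝ} (hδ : 0 < δ) (hk : 8 * k ≤ a)
    (hδa : 8 * log (2 / δ) ≤ a) : 2 ^ k * exp (-a / 2) ≤ δ := by
  have hlog2 : log 2 < 1 := by linarith [log_two_lt_d9]
  have hlog2_pos : 0 < log 2 := log_pos one_lt_two
  have hk' : k * log 2 ≤ k := mul_le_of_le_one_right (Nat.cast_nonneg k) hlog2.le
  rw [log_div two_ne_zero hδ.ne'] at hδa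
  calc 2 ^ k * exp (-a / 2) = exp (k * log 2 - a / 2) := by
        rw [exp_sub, exp_nat_mul, exp_log two_pos, neg_div, exp_neg]
        exact (div_eq_mul_inv _ _).symm
    _ ≤ exp (log δ) := exp_le_exp.2 (by linarith)
    _ = δ := exp_log hδ

/-- **ℓ1 concentration of the empirical distribution.** Let `p` be a
probability distribution on a finite set `X`, let `ξ 1, …, ξ N` be i.i.d. samples with law
`p` and let `p̂` be the empirical distribution. For `ε, δ ∈ (0,1)`, if
`N ≥ max{8|X|/ε², (8/ε²)·log(2/δ)}`, then `Pr(‖p − p̂‖₁ ≥ ε) ≤ δ`. -/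
theorem empirical_l1_concentration {X : Type*} [Fintype X] [MeasurableSpace X]
    [MeasurableSingletonClass X]
    {Ω : Type*} [MeasureSpace Ω] [IsProbabilityMeasure (ℙ : Measure Ω)]
    (p : X → ℝ) (hp : p ∈ stdSimplex ℝ X)
    (N : ℕ) (ξ : Fin N → Ω → X) (hmeas : ∀ n, Measurable (ξ n))
    (hindep : iIndepFun ξ ℙ)
    (hlaw : ∀ (n : Fin N) (x : X), ℙ {ω | ξ n ω = x} = ENNReal.ofReal (p x))
    (ε δ : ℝ) (hε : ε ∈ Set.Ioo (0 : ℝ) 1) (hδ : δ ∈ Set.Ioo (0 : ℝ) 1)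
    (hN : max (8 * Fintype.card X / ε ^ 2) (8 / ε ^ 2 * Real.log (2 / δ)) ≤ (N : ℝ)) :
    ℙ {ω | ε ≤ ∑ x, |p x -
        ((Finset.univ.filter fun n => ξ n ω = x).card : ℝ) / (N : ℝ)|}
      ≤ ENNReal.ofReal δ := by
  obtain ⟨hε0, -⟩ := hε
  obtain ⟨hδ0, hδ1⟩ := hδ
  obtain ⟨hk, hlog⟩ := max_le_iff.1 hN
  rw [div_le_iff₀ (by positivity)] at hk
  rw [div_mul_eq_mul_div, div_le_iff₀ (by positivity)] at hlog
  have hN0 : N ≠ 0 := by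
    rintro rfl
    rw [Nat.cast_zero, zero_mul] at hlog
    linarith [log_pos (show 1 < 2 / δ by rw [lt_div_iff₀ hδ0]; linarith)]
  have hcover : {ω | ε ≤ ∑ x, |p x - empiricalFreq (ξ · ω) x|} ⊆
      ⋃ A : Finset X,
        {ω | ε / 2 ≤ ∑ x ∈ A, p x - #{n | ξ n ω ∈ (A : Set X)} / N} := by
    intro ω hω
    obtain ⟨A, hA⟩ := exists_sum_abs_sub_eq_two_mul (q := empiricalFreq (ξ · ω))
      (by rw [hp.2, sum_empiricalFreq_univ _ hN0])
    refine Set.mem_iUnion.2 ⟨A, ?_⟩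
    simp only [Set.mem_ofPred_eq, mem_coe, ← sum_empiricalFreq]
    linarith [hω.out]
  rw [ENNReal.le_ofReal_iff_toReal_le (measure_ne_top _ _) hδ0.le]
  change (volume : Measure Ω).real {ω | ε ≤ ∑ x, |p x - empiricalFreq (ξ · ω) x|} ≤ δ
  calc _ ≤ _ := (measureReal_mono hcover).trans (measureReal_iUnion_fintype_le _)
    _ ≤ ∑ _A : Finset X, exp (-2 * N * (ε / 2) ^ 2) := sum_le_sum fun A _ =>
        measureReal_sub_freq_ge_le hmeas hindep A.measurableSet
          (fun n => measureReal_preimage_finset_eq_sum (hmeas n) hp.1 (hlaw n) A) (by positivity)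
    _ = 2 ^ Fintype.card X * exp (-(N * ε ^ 2) / 2) := by
        rw [sum_const, card_univ, Fintype.card_finset, nsmul_eq_mul]
        push_cast
        ring_nf
    _ ≤ δ := two_pow_mul_exp_neg_le hδ0 (by linarith) (by linarith)
end
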